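/- arXiv:2008.11704 — 2 statements merged into one kernel-verified Lean document; each statement's English description precedes it below -/
import Mathlib

section
/- Let G be a finite group, H a complex Hilbert space, and φ : ℂ[G] → B(H) a linear map of the form φ(u) for u ∈ G, extended linearly. Suppose the operator P̂ := ∑_{u∈G} λ(u) ⊗ φ(u) on ℂ[G] ⊗ H is positive, where λ is the left regular representation. Then φ is completely positive: for all k ≥ 1, f₁,…,f_k ∈ ℂ[G], x₁,…,x_k ∈ H, one has ∑_{i,j=1}^k ⟨φ(f_j* f_i) x_i, x_j⟩ ≥ 0. -/
noncomputable section

/-- Linear extension of `φ : G → B(H)` to the group algebra `ℂ[G] = (G → ℂ)`: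
`φ(f) = ∑_u f(u) • φ(u)`. -/
def phiExt {G : Type*} [Group G] [Fintype G]
    {H : Type*} [NormedAddCommGroup H] [InnerProductSpace ℂ H] [CompleteSpace H]
    (φ : G → (H →L[ℂ] H)) (f : G → ℂ) : H →L[ℂ] H :=
  ∑ u : G, f u • φ u

/-- The convolution `f* ⋆ g` in `ℂ[G]`, where `f*(u) = conj (f u⁻¹)`:
`(f* ⋆ g)(w) = ∑_a conj (f a⁻¹) * g (a⁻¹ w)`. -/
def starConv {G : Type*} [Group G] [Fintype G] (f g : G → ℂ) : G → ℂ :=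
  fun w => ∑ a : G, (starRingEnd ℂ) (f a⁻¹) * g (a⁻¹ * w)

/-!
Positivity of `P̂` is tested on `y = ∑_u u ⊗ ∑_i f_i(u⁻¹) x_i`: expanding `⟨P̂ y, y⟩` and
`∑_{i,j} ⟨φ(f_j* f_i) x_i, x_j⟩` gives the same quadruple sum over `a, u ∈ G` and `i, j`.
-/

open Finset ComplexConjugate

section

variable {G : Type*} [Group G] [Fintype G]
  {H : Type*} [NormedAddCommGroup H] [InnerProductSpace ℂ H]

/-- `P̂ = ∑_u λ(u) ⊗ φ(u)` on `ℂ[G] ⊗ H ≅ ⊕_{g ∈ G} H`. -/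
def regularTensor (φ : G → H →L[ℂ] H) (y : PiLp 2 (fun _ : G => H)) :
    PiLp 2 (fun _ : G => H) :=
  WithLp.toLp 2 fun g => ∑ u, φ u (y (u⁻¹ * g))

def testVector {ι : Type*} [Fintype ι] (f : ι → G → ℂ) (x : ι → H) :
    PiLp 2 (fun _ : G => H) :=
  WithLp.toLp 2 fun g => ∑ i, f i g⁻¹ • x i

lemma inner_phiExt_starConv [CompleteSpace H] (φ : G → H →L[ℂ] H) (f g : G → ℂ) (x z : H) :
    inner ℂ (phiExt φ (starConv g f) x) z =
      ∑ a, ∑ u, g a⁻¹ * conj (f (a⁻¹ * u)) * inner ℂ (φ u x) z := by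
  simp only [phiExt, starConv, FunLike.coe_sum, Finset.sum_apply,
    FunLike.coe_smul, Pi.smul_apply, sum_inner, inner_smul_left, map_sum, map_mul,
    Complex.conj_conj, sum_mul]
  rw [sum_comm]

lemma inner_regularTensor_testVector {ι : Type*} [Fintype ι] (φ : G → H →L[ℂ] H)
    (f : ι → G → ℂ) (x : ι → H) :
    inner ℂ (regularTensor φ (testVector f x)) (testVector f x) =
      ∑ a, ∑ j, ∑ u, ∑ i, f j a⁻¹ * conj (f i (a⁻¹ * u)) * inner ℂ (φ u (x i)) (x j) := by
  simp only [regularTensor, testVector, PiLp.inner_apply, PiLp.toLp_apply, map_sum, map_smul,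
    sum_inner, inner_sum, inner_smul_left, inner_smul_right, mul_inv_rev, inv_inv, mul_sum,
    mul_assoc]

lemma sum_inner_phiExt_starConv_eq [CompleteSpace H] {ι : Type*} [Fintype ι]
    (φ : G → H →L[ℂ] H) (f : ι → G → ℂ) (x : ι → H) :
    ∑ i, ∑ j, inner ℂ (phiExt φ (starConv (f j) (f i)) (x i)) (x j) =
      inner ℂ (regularTensor φ (testVector f x)) (testVector f x) := by
  simp only [inner_phiExt_starConv, inner_regularTensor_testVector]
  rw [sum_comm]
  exact (sum_congr rfl fun _ _ => sum_comm_cycle.symm).trans sum_comm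

end

/-- Let `G` be a finite group, `H` a complex Hilbert space, and
`φ : G → B(H)`, extended linearly to `ℂ[G]`. Suppose the operator
`P̂ = ∑_{u ∈ G} λ(u) ⊗ φ(u)` on `ℂ[G] ⊗ H ≅ ⊕_{g ∈ G} H` is positive, where `λ` is the
left regular representation (so `(P̂ y)(g) = ∑_u φ(u) (y (u⁻¹ g))`). Then `φ` is
completely positive: for all `k ≥ 1`, `f₁, …, f_k ∈ ℂ[G]` and `x₁, …, x_k ∈ H`,
`∑_{i,j} ⟨φ(f_j* f_i) x_i, x_j⟩ ≥ 0`. -/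
theorem completely_positive_of_Phat_positive
    {G : Type*} [Group G] [Fintype G]
    {H : Type*} [NormedAddCommGroup H] [InnerProductSpace ℂ H] [CompleteSpace H]
    (φ : G → (H →L[ℂ] H))
    (hpos : ∀ y : PiLp 2 (fun _ : G => H),
      0 ≤ Complex.re (inner (𝕜 := ℂ)
            (show PiLp 2 (fun _ : G => H) from WithLp.toLp 2 (fun g => ∑ u : G, φ u (y (u⁻¹ * g)))) y) ∧
      Complex.im (inner (𝕜 := ℂ)
            (show PiLp 2 (fun _ : G => H) from WithLp.toLp 2 (fun g => ∑ u : G, φ u (y (u⁻¹ * g)))) y) = 0) :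
    ∀ (k : ℕ), 1 ≤ k → ∀ (f : Fin k → G → ℂ) (x : Fin k → H),
      0 ≤ Complex.re (∑ i : Fin k, ∑ j : Fin k,
            inner (𝕜 := ℂ) ((phiExt φ (starConv (f j) (f i))) (x i)) (x j)) ∧
      Complex.im (∑ i : Fin k, ∑ j : Fin k,
            inner (𝕜 := ℂ) ((phiExt φ (starConv (f j) (f i))) (x i)) (x j)) = 0 := by
  intro k _ f x
  rw [sum_inner_phiExt_starConv_eq]
  exact hpos _

end
end

section
/- Let H be a Hilbert space, P_n a strictly positive self-adjoint bounded operator on H^{⊗n} for each n, and define ⟨X,Y⟩_G := δ_{kn}⟨X, P_n Y⟩ for X ∈ H^{⊗k}, Y ∈ H^{⊗n}. Suppose d* and d are operators on ⊕_n H^{⊗n} satisfying P_{n+1} = (id_H ⊗ P_n) R_{n+1}, d*(x) = l*(x), d(x) = l(x) R_{n+1} on H^{⊗(n+1)}, and l*(x) intertwines as l(x)(id ⊗ P_n) = P_n l(x). Then d*(x) and d(x) are mutually adjoint with respect to ⟨·,·⟩_G: ⟨d*(x)X, Y⟩_G = ⟨X, d(x)Y⟩_G for X ∈ H^{⊗n},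 Y ∈ H^{⊗(n+1)}. -/
/-- Let `P_n` be a strictly positive self-adjoint bounded operator on
`H^{⊗n}` (here the abstract Hilbert space `F n`), defining the deformed form
`⟨X,Y⟩_G = ⟨X, P_n Y⟩`. Let `l*(x) = C x n` and `l(x) = A x n` be the canonical free
creation/annihilation operators, adjoint with respect to the canonical inner product,
suppose `P_{n+1} = (id_H ⊗ P_n) R_{n+1}` (with `Q n = id_H ⊗ P_n`) and
`l(x) (id ⊗ P_n) = P_n l(x)`, and set `d*(x) = l*(x)`, `d(x) = l(x) R_{n+1}`. Then
`d*(x)` and `d(x)` are mutually adjoint for `⟨·,·⟩_G`: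
`⟨d*(x) X, Y⟩_G = ⟨X, d(x) Y⟩_G` for `X ∈ H^{⊗n}`, `Y ∈ H^{⊗(n+1)}`. -/
theorem creation_annihilation_G_adjoint
    {H : Type*} [NormedAddCommGroup H] [InnerProductSpace ℂ H] [CompleteSpace H]
    {F : ℕ → Type*} [∀ n, NormedAddCommGroup (F n)] [∀ n, InnerProductSpace ℂ (F n)]
    [∀ n, CompleteSpace (F n)]
    (C : H → ∀ n, F n →L[ℂ] F (n + 1)) (A : H → ∀ n, F (n + 1) →L[ℂ] F n)
    (P : ∀ n, F n →L[ℂ] F n) (Q R : ∀ n, F (n + 1) →L[ℂ] F (n + 1))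
    -- `P_n` is self-adjoint and strictly positive
    (hPsa : ∀ n, IsSelfAdjoint (P n))
    (hPpos : ∀ n, ∀ X : F n, X ≠ 0 → 0 < Complex.re (inner (𝕜 := ℂ) X ((P n) X)))
    -- `l*` and `l` are adjoint with respect to the canonical inner product
    (hadj : ∀ (x : H) (n : ℕ) (X : F n) (Y : F (n + 1)),
      inner (𝕜 := ℂ) ((C x n) X) Y = inner (𝕜 := ℂ) X ((A x n) Y))
    -- `P_{n+1} = (id_H ⊗ P_n) R_{n+1}`
    (hrec : ∀ n, P (n + 1) = Q n * R n)
    -- `l(x) (id_H ⊗ P_n) = P_n l(x)`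
    (hint : ∀ (x : H) (n : ℕ), (A x n).comp (Q n) = (P n).comp (A x n)) :
    ∀ (x : H) (n : ℕ) (X : F n) (Y : F (n + 1)),
      inner (𝕜 := ℂ) ((C x n) X) ((P (n + 1)) Y)
        = inner (𝕜 := ℂ) X ((P n) ((A x n) ((R n) Y))) := by
  intro x n X Y
  have h1 : (P (n+1)) Y = (Q n) ((R n) Y) := by rw [hrec n]; rfl
  rw [h1, hadj]
  have h2 := congrArg (fun T => T ((R n) Y)) (hint x n)
  simpa using congrArg (fun Z => inner (𝕜 := ℂ) X Z) h2
end
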